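/- arXiv:2005.10231 — 3 statements merged into one kernel-verified Lean document; each statement's English description precedes it below -/
import Mathlib

section
/- Let R be a noetherian local commutative ring with maximal ideal m that is complete with respect to the m-adic topology, and let R' be an étale R-algebra. Then there exist R-algebras T and S and an R-algebra isomorphism R' ≅ T × S such that T is a finite étale R-algebra and S is an étale R-algebra with S = m·S; in particular S is not a faithfully flat R-module. -/
/-!
Let `J = m R'` and let `B` be the `J`-adic completion of `R'`. As `R'` is unramified of finite
type, `R' / J` is finite over the residue field; since `R` is complete and `B` is `m`-adically
Hausdorff, the complete Nakayama lemma shows that `B` is a finite `R`-module and that `R' → B` is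
surjective. Being the completion of a noetherian ring, `B = R' / ker` is flat over `R'`, so the
kernel is an idempotent finitely generated ideal, hence generated by an idempotent `e ∈ J`. Then
`R' ≅ R'/(e) × R'/(1 - e)`, where `R'/(e) ≅ B` is finite, and `e` becomes `1` in `R'/(1 - e)`,
which therefore equals its `m`-multiple.
-/

open Submodule

section CompleteNakayama

variable {R M N : Type*} [CommRing R] [AddCommGroup M] [Module R M] [AddCommGroup N] [Module R N]
  {I : Ideal R}

theorem Finsupp.mem_smul_top_iff {ι : Type*} (x : ι →₀ M) :
    x ∈ (I • ⊤ : Submodule R (ι →₀ M)) ↔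
      ∀ i, x i ∈ (I • ⊤ : Submodule R M) := by
  rw [← Finsupp.submodule_top, ← Finsupp.submodule_smul, Finsupp.mem_submodule_iff]

instance IsPrecomplete.finsupp {ι : Type*} [Finite ι] [IsPrecomplete I M] :
    IsPrecomplete I (ι →₀ M) := by
  refine ⟨fun f hf => ?_⟩
  have coord (i : ι) : ∃ L : M, ∀ n, f n i ≡ L [SMOD (I ^ n • ⊤ : Submodule R M)] :=
    IsPrecomplete.prec ‹_› fun hmn => by
      have h := hf hmn
      rw [SModEq.sub_mem, Finsupp.mem_smul_top_iff] at h
      simpa [SModEq.sub_mem] using h i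
  choose L hL using coord
  refine ⟨Finsupp.equivFunOnFinite.symm L, fun n => ?_⟩
  simpa [SModEq.sub_mem, Finsupp.mem_smul_top_iff] using fun i => hL i n

theorem LinearMap.surjective_of_range_sup_smul_top_eq_top [IsPrecomplete I M] [IsHausdorff I N]
    (f : M →ₗ[R] N) (hf : LinearMap.range f ⊔ I • ⊤ = ⊤) : Function.Surjective f :=
  surjective_of_mkQ_comp_surjective (I := I) <| by
    rw [← LinearMap.range_eq_top, LinearMap.range_comp, map_mkQ_eq_top, sup_comm, hf]

theorem Submodule.exists_finsupp_range_sup_eq_top (p : Submodule R M) [Module.Finite R (M ⧸ p)] :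
    ∃ n, ∃ g : (Fin n →₀ R) →ₗ[R] M, LinearMap.range g ⊔ p = ⊤ := by
  obtain ⟨n, s, hs⟩ := Module.Finite.exists_fin (R := R) (M := M ⧸ p)
  choose t ht using fun i => p.mkQ_surjective (s i)
  refine ⟨n, Finsupp.linearCombination R t, ?_⟩
  rw [sup_comm, ← map_mkQ_eq_top, ← LinearMap.range_comp,
    ← Finsupp.linearCombination_linear_comp, show p.mkQ ∘ t = s from funext ht,
    Finsupp.range_linearCombination, hs]

theorem LinearMap.surjective_and_finite_of_range_sup_smul_top_eq_top [IsPrecomplete I R]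
    [IsHausdorff I N] [Module.Finite R (M ⧸ (I • ⊤ : Submodule R M))] (f : M →ₗ[R] N)
    (hf : LinearMap.range f ⊔ I • ⊤ = ⊤) : Function.Surjective f ∧ Module.Finite R N := by
  obtain ⟨n, g, hg⟩ := Submodule.exists_finsupp_range_sup_eq_top (I • ⊤ : Submodule R M)
  have hfg : LinearMap.range (f ∘ₗ g) ⊔ I • ⊤ = ⊤ := by
    refine eq_top_iff.mpr (hf.symm.le.trans (sup_le ?_ le_sup_right))
    calc LinearMap.range f = (LinearMap.range g ⊔ I • ⊤).map f := by
          rw [hg, Submodule.map_top]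
      _ ≤ LinearMap.range (f ∘ₗ g) ⊔ I • ⊤ := by
        rw [Submodule.map_sup, LinearMap.range_comp, map_smul'', Submodule.map_top]
        exact sup_le_sup_left (smul_mono_right _ le_top) _
  have surj := (f ∘ₗ g).surjective_of_range_sup_smul_top_eq_top hfg
  exact ⟨.of_comp surj, .of_surjective _ surj⟩

end CompleteNakayama

theorem Algebra.FormallyUnramified.finite_quotient_map_of_isMaximal {R A : Type*} [CommRing R]
    [CommRing A] [Algebra R A] [FormallyUnramified R A] [FiniteType R A]
    (m : Ideal R) [m.IsMaximal] : Module.Finite R (A ⧸ m.map (algebraMap R A)) := by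
  let := Ideal.Quotient.field m
  have : FormallyUnramified (R ⧸ m) (A ⧸ m.map (algebraMap R A)) := .of_restrictScalars R _ _
  have : EssFiniteType (R ⧸ m) (A ⧸ m.map (algebraMap R A)) := .of_comp R _ _
  have : Module.Finite (R ⧸ m) (A ⧸ m.map (algebraMap R A)) := finite_of_free _ _
  exact .trans (R ⧸ m) _

theorem Algebra.Etale.quotient_span_singleton_of_isIdempotentElem {R A : Type*} [CommRing R]
    [CommRing A] [Algebra R A] [Etale R A] {e : A} (he : IsIdempotentElem e) :
    Etale R (A ⧸ Ideal.span {e}) := by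
  have := IsLocalization.Away.quotient_of_isIdempotentElem he.one_sub
  rw [sub_sub_cancel] at this
  have : Etale A (A ⧸ Ideal.span {e}) := .of_isLocalizationAway (1 - e)
  exact .comp R A _

theorem Ideal.smul_top_quotient_span_one_sub_eq_top {R A : Type*} [CommRing R] [CommRing A]
    [Algebra R A] {I : Ideal R} {e : A} (he : e ∈ I.map (algebraMap R A)) :
    I • (⊤ : Submodule R (A ⧸ Ideal.span {1 - e})) = ⊤ := by
  have hone : algebraMap A (A ⧸ Ideal.span {1 - e}) e = 1 := by
    rw [Ideal.Quotient.algebraMap_eq, ← map_one (Ideal.Quotient.mk _), Ideal.Quotient.eq,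
      ← neg_sub 1 e]
    exact neg_mem (Ideal.mem_span_singleton_self _)
  have htop : (I.map (algebraMap R A)).map (algebraMap A (A ⧸ Ideal.span {1 - e})) = ⊤ :=
    (Ideal.eq_top_iff_one _).mpr (hone ▸ Ideal.mem_map_of_mem _ he)
  rw [Ideal.smul_top_eq_map, IsScalarTower.algebraMap_eq R A, ← Ideal.map_map, htop,
    restrictScalars_top]

namespace AdicCompletion

variable {A M : Type*} [CommRing A] [AddCommGroup M] [Module A M] {J : Ideal A}

theorem mem_smul_top_of_of_eq_zero {x : M} (hx : of J M x = 0) :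
    x ∈ (J • ⊤ : Submodule A M) := by
  have h := congrArg (eval J M 1) hx
  rwa [eval_of, _root_.map_zero, mkQ_apply, Quotient.mk_eq_zero, pow_one] at h

theorem range_of_sup_smul_top_eq_top (hJ : J.FG) :
    LinearMap.range (of J M) ⊔ J • ⊤ = ⊤ := by
  refine eq_top_iff.mpr fun x _ => ?_
  obtain ⟨y, hy⟩ := mkQ_surjective _ (eval J M 1 x)
  have hyx : of J M y - x ∈ (J ^ 1 • ⊤ : Submodule A (AdicCompletion J M)) := by
    rw [pow_smul_top_eq_ker_eval hJ, LinearMap.mem_ker, map_sub, eval_of, hy, sub_self]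
  rw [pow_one] at hyx
  rw [← sub_sub_cancel (of J M y) x]
  exact sub_mem (mem_sup_left (LinearMap.mem_range_self _ y)) (mem_sup_right hyx)

theorem of_surjective_and_finite {R : Type*} [CommRing R] [Algebra R A] [Module R M]
    [IsScalarTower R A M] (I : Ideal R) [IsPrecomplete I R] (hJ : (I.map (algebraMap R A)).FG)
    [Module.Finite R (M ⧸ (I • ⊤ : Submodule R M))] :
    Function.Surjective (of (I.map (algebraMap R A)) M) ∧
      Module.Finite R (AdicCompletion (I.map (algebraMap R A)) M) := by
  have : IsHausdorff I (AdicCompletion (I.map (algebraMap R A)) M) :=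
    (IsHausdorff.map_algebraMap_iff (S := A)).mp inferInstance
  refine ((of _ M).restrictScalars R).surjective_and_finite_of_range_sup_smul_top_eq_top (I := I) ?_
  have h := congrArg (restrictScalars R) (range_of_sup_smul_top_eq_top (M := M) hJ)
  rwa [restrictScalars_sup, restrictScalars_map_smul_eq, restrictScalars_top,
    ← LinearMap.range_restrictScalars] at h

theorem exists_isIdempotentElem_ker_algebraMap_eq_span [IsNoetherianRing A]
    (hsurj : Function.Surjective (of J A)) :
    ∃ e : A, IsIdempotentElem e ∧
      RingHom.ker (algebraMap A (AdicCompletion J A)) = .span {e} := by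
  have : (RingHom.ker (algebraMap A (AdicCompletion J A))).Pure := .of_linearEquiv
    (Ideal.quotientKerAlgEquivOfSurjective (f := Algebra.ofId A _) hsurj).toLinearEquiv
  exact (Ideal.isIdempotentElem_iff_of_fg _ (IsNoetherian.noetherian _)).mp
    (Ideal.isIdempotentElem_of_pure _)

end AdicCompletion

/-- Let R be a complete noetherian local ring and R' an étale R-algebra. Then R' is
isomorphic as an R-algebra to a product T × S with T finite étale over R and S étale
over R with S = m·S; in particular S is not faithfully flat over R. -/
theorem etale_algebra_over_complete_local_splits
    (R R' : Type) [CommRing R] [IsLocalRing R] [IsNoetherianRing R]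
    [IsAdicComplete (IsLocalRing.maximalIdeal R) R]
    [CommRing R'] [Algebra R R'] [Algebra.Etale R R'] :
    ∃ (T S : Type) (_ : CommRing T) (_ : CommRing S) (_ : Algebra R T) (_ : Algebra R S),
      Nonempty (R' ≃ₐ[R] T × S) ∧
      Algebra.Etale R T ∧ Module.Finite R T ∧
      Algebra.Etale R S ∧
      (IsLocalRing.maximalIdeal R) • (⊤ : Submodule R S) = ⊤ ∧
      ¬ Module.FaithfullyFlat R S := by
  set m := IsLocalRing.maximalIdeal R
  set J := m.map (algebraMap R R')
  have : IsNoetherianRing R' := Algebra.FiniteType.isNoetherianRing R R'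
  have : Module.Finite R (R' ⧸ (m • ⊤ : Submodule R R')) := by
    have := Algebra.FormallyUnramified.finite_quotient_map_of_isMaximal (A := R') m
    rw [Ideal.smul_top_eq_map]
    exact .equiv (Quotient.restrictScalarsEquiv R _).symm
  obtain ⟨hsurj, hfin⟩ :=
    AdicCompletion.of_surjective_and_finite (M := R') m (IsNoetherian.noetherian J)
  obtain ⟨e, he, hker⟩ := AdicCompletion.exists_isIdempotentElem_ker_algebraMap_eq_span hsurj
  have heJ : e ∈ J := by
    have hzero := RingHom.mem_ker.mp (hker ▸ Ideal.mem_span_singleton_self e)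
    simpa using AdicCompletion.mem_smul_top_of_of_eq_zero (J := J) (M := R') hzero
  let eT : (R' ⧸ Ideal.span {e}) ≃ₐ[R'] AdicCompletion J R' :=
    (Ideal.quotientEquivAlgOfEq R' hker.symm).trans
      (Ideal.quotientKerAlgEquivOfSurjective (f := Algebra.ofId R' _) hsurj)
  have hmS := Ideal.smul_top_quotient_span_one_sub_eq_top heJ
  exact ⟨R' ⧸ Ideal.span {e}, R' ⧸ Ideal.span {1 - e}, _, _, _, _,
    ⟨AlgEquiv.prodQuotientOfIsIdempotentElem R he he.one_sub (add_sub_cancel e 1)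
      (isIdempotentElem_iff_mul_one_sub_self.mp he)⟩,
    .quotient_span_singleton_of_isIdempotentElem he,
    .equiv (eT.toLinearEquiv.restrictScalars R).symm,
    .quotient_span_singleton_of_isIdempotentElem he.one_sub, hmS,
    fun h => h.submodule_ne_top inferInstance hmS⟩
end

section
/- Let I be an index set, for each i ∈ I let R_i be a commutative local ring, and set R = ∏_{i∈I} R_i. Let M be a finitely generated projective R-module of constant rank, i.e., there exists a natural number n such that for every prime ideal p of R the dimension of the κ(p)-vector space M ⊗_R κ(p) equals n, where κ(p) is the residue field at p. Then M is a free R-module. -/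
/-!
A finitely generated projective module `N` over `∏ R i` is the product of its base changes
`R i ⊗ N`: this holds for finite free modules and passes to retracts. Over the local ring `R i`
the base change is free, and its rank is the rank of `N` at the prime pulled back from the closed
point of `R i`, which is `n`. Choosing bases factorwise gives `N ≃ ∏ i, (R i)ⁿ ≃ (∏ i, R i)ⁿ`.
-/

open TensorProduct Module

theorem Module.finrank_baseChange_eq_rankAtStalk {A B : Type*} [CommRing A] [CommRing B]
    [IsLocalRing B] [Algebra A B] (N : Type*) [AddCommGroup N] [Module A N]
    [Module.Finite A N] [Module.Flat A N] :
    finrank B (B ⊗[A] N) = rankAtStalk N ((IsLocalRing.closedPoint B).comap (algebraMap A B)) := by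
  have : Module.Free B (B ⊗[A] N) := free_of_flat_of_isLocalRing
  rw [← rankAtStalk_baseChange, rankAtStalk_eq_finrank_of_free]
  rfl

namespace Pi

variable {I : Type*} (R : I → Type*) [∀ i, CommRing (R i)]

noncomputable abbrev evalAlgebra (i : I) : Algebra (∀ j, R j) (R i) :=
  (Pi.evalRingHom R i).toAlgebra

attribute [local instance] evalAlgebra

theorem evalAlgebra_smul_def {i : I} (s : ∀ j, R j) (a : R i) : s • a = s i * a :=
  Algebra.smul_def s a

variable (N : Type*) [AddCommGroup N] [Module (∀ i, R i) N]

noncomputable def toPiBaseChange : N →ₗ[∀ i, R i] ∀ i, R i ⊗[∀ j, R j] N :=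
  LinearMap.pi fun i => TensorProduct.mk _ (R i) N 1

@[simp]
theorem toPiBaseChange_apply (x : N) (i : I) : toPiBaseChange R N x i = 1 ⊗ₜ x := rfl

variable {N} in
theorem toPiBaseChange_map_apply {N' : Type*} [AddCommGroup N'] [Module (∀ i, R i) N']
    (f : N →ₗ[∀ i, R i] N') (x : N) (i : I) :
    toPiBaseChange R N' (f x) i = f.baseChange (R i) (toPiBaseChange R N x i) := rfl

theorem toPiBaseChange_bijective_of_free (ι : Type*) [Fintype ι] [DecidableEq ι] :
    Function.Bijective (toPiBaseChange R (ι → ∀ j, R j)) := by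
  let e : (∀ i, R i ⊗[∀ j, R j] (ι → ∀ j, R j)) ≃ ∀ i, ι → R i :=
    Equiv.piCongrRight fun i => (piScalarRight (∀ j, R j) (R i) (R i) ι).toEquiv
  have : e ∘ toPiBaseChange R (ι → ∀ j, R j) = Equiv.piComm _ := by
    funext x i k
    simp [e, piScalarRight_apply, evalAlgebra_smul_def]
  rw [← e.bijective.of_comp_iff', this]
  exact (Equiv.piComm _).bijective

variable {N} in
theorem toPiBaseChange_bijective_of_retract {F : Type*} [AddCommGroup F] [Module (∀ i, R i) F]
    (f : F →ₗ[∀ i, R i] N) (s : N →ₗ[∀ i, R i] F) (hfs : f ∘ₗ s = LinearMap.id)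
    (hF : Function.Bijective (toPiBaseChange R F)) :
    Function.Bijective (toPiBaseChange R N) := by
  have hfs' (i : I) (y : R i ⊗[∀ j, R j] N) : f.baseChange (R i) (s.baseChange (R i) y) = y := by
    rw [← LinearMap.comp_apply, ← LinearMap.baseChange_comp, hfs, LinearMap.baseChange_id]; rfl
  constructor
  · intro x x' h
    have hs : Function.Injective s := Function.LeftInverse.injective (LinearMap.congr_fun hfs)
    refine hs (hF.injective (funext fun i => ?_))
    rw [toPiBaseChange_map_apply, toPiBaseChange_map_apply, congrFun h i]
  · intro y
    obtain ⟨z, hz⟩ := hF.surjective fun i => s.baseChange (R i) (y i)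
    exact ⟨f z, funext fun i => by rw [toPiBaseChange_map_apply, hz, hfs']⟩

theorem toPiBaseChange_bijective [Module.Finite (∀ i, R i) N] [Module.Projective (∀ i, R i) N] :
    Function.Bijective (toPiBaseChange R N) := by
  obtain ⟨k, f, hf⟩ := Module.Finite.exists_fin' (∀ i, R i) N
  obtain ⟨s, hs⟩ := Module.projective_lifting_property f LinearMap.id hf
  exact toPiBaseChange_bijective_of_retract R f s hs (toPiBaseChange_bijective_of_free R (Fin k))

theorem free_of_finrank_baseChange_eq [∀ i, IsLocalRing (R i)]
    [Module.Finite (∀ i, R i) N] [Module.Projective (∀ i, R i) N] {n : ℕ}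
    (h : ∀ i, finrank (R i) (R i ⊗[∀ j, R j] N) = n) : Module.Free (∀ i, R i) N := by
  have (i : I) : Module.Free (R i) (R i ⊗[∀ j, R j] N) := free_of_flat_of_isLocalRing
  let eFib (i : I) : R i ⊗[∀ j, R j] N ≃ₗ[∀ j, R j] Fin n → R i :=
    ((finBasisOfFinrankEq (R i) _ (h i)).equivFun).restrictScalars (∀ j, R j)
  let eComm : (∀ i, Fin n → R i) ≃ₗ[∀ j, R j] Fin n → ∀ i, R i :=
    { Equiv.piComm _ with map_add' := fun _ _ => rfl, map_smul' := fun _ _ => rfl }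
  exact .of_equiv ((LinearEquiv.ofBijective _ (toPiBaseChange_bijective R N)).trans
    ((LinearEquiv.piCongrRight eFib).trans eComm)).symm

end Pi

/-- Let R = ∏ R_i be a product of commutative local rings. Then every finitely generated
projective R-module of constant rank (the residue-field fibers all have dimension n for
some fixed natural number n) is free. -/
theorem free_of_constant_rank_over_pi_local
    {I : Type} (R : I → Type) [∀ i, CommRing (R i)] [∀ i, IsLocalRing (R i)]
    (M : Type) [AddCommGroup M] [Module (∀ i, R i) M]
    [Module.Finite (∀ i, R i) M] [Module.Projective (∀ i, R i) M]
    (n : ℕ)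
    (hrank : ∀ (p : Ideal (∀ i, R i)) (_ : p.IsPrime),
      Module.rank (IsLocalRing.ResidueField (Localization.AtPrime p))
        (IsLocalRing.ResidueField (Localization.AtPrime p) ⊗[∀ i, R i] M) = (n : Cardinal)) :
    Module.Free (∀ i, R i) M := by
  have hstalk (p : PrimeSpectrum (∀ i, R i)) : rankAtStalk M p = n := by
    rw [rankAtStalk_eq]
    exact finrank_eq_of_rank_eq (hrank p.asIdeal p.isPrime)
  let := Pi.evalAlgebra R
  exact Pi.free_of_finrank_baseChange_eq R M fun i => by
    rw [finrank_baseChange_eq_rankAtStalk, hstalk]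
end

section
/- Let I be an index set, for each v ∈ I let O_v be a commutative local ring, and set R = ∏_{v∈I} O_v. For a subset J ⊆ I let e^J ∈ R denote the idempotent whose v-th component is 1 if v ∈ J and 0 otherwise. Then every open cover of the prime spectrum Spec R admits a refinement that is a finite disjoint open cover by basic open sets of the form D(e^J): there exist finitely many pairwise disjoint subsets J_1, …, J_k of I whose union is I, such that the basic opens D(e^{J_1}), …, D(e^{J_k}) are pairwise disjoint, cover Spec R, and each D(e^{J_l}) is contained in some member of the given cover. -/
open scoped Classical in
/-- For `R = ∏ O_v` a product of local rings and `J ⊆ I`, the idempotent `e^J ∈ R` whose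
`v`-th component is `1` for `v ∈ J` and `0` otherwise. -/
noncomputable def idempotentOfSet {I : Type} (O : I → Type) [∀ v, CommRing (O v)]
    (J : Set I) : ∀ v, O v :=
  fun v => if v ∈ J then 1 else 0

section Aux

variable {I : Type} (O : I → Type) [∀ v, CommRing (O v)]

lemma idem_apply_mem {J : Set I} {v : I} (h : v ∈ J) : idempotentOfSet O J v = 1 := by
  simp [idempotentOfSet, h]

lemma idem_apply_notMem {J : Set I} {v : I} (h : v ∉ J) : idempotentOfSet O J v = 0 := by
  simp [idempotentOfSet, h]

lemma idem_univ : idempotentOfSet O (Set.univ : Set I) = 1 := by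
  funext v; simp [idempotentOfSet]

lemma idem_empty : idempotentOfSet O (∅ : Set I) = 0 := by
  funext v; simp [idempotentOfSet]

lemma idem_inter (A B : Set I) :
    idempotentOfSet O (A ∩ B) = idempotentOfSet O A * idempotentOfSet O B := by
  funext v
  by_cases hA : v ∈ A <;> by_cases hB : v ∈ B <;>
    simp [idempotentOfSet, hA, hB, Pi.mul_apply]

lemma idem_union (A B : Set I) :
    idempotentOfSet O (A ∪ B) =
      idempotentOfSet O A + idempotentOfSet O B - idempotentOfSet O A * idempotentOfSet O B := by
  funext v
  by_cases hA : v ∈ A <;> by_cases hB : v ∈ B <;>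
    simp [idempotentOfSet, hA, hB, Pi.mul_apply, Pi.add_apply, Pi.sub_apply]

lemma idem_mul_of_subset {A B : Set I} (h : A ⊆ B) :
    idempotentOfSet O A * idempotentOfSet O B = idempotentOfSet O A := by
  rw [← idem_inter, Set.inter_eq_self_of_subset_left h]

/-- If `A ⊆ B` then `D(e^A) ⊆ D(e^B)`. -/
lemma basicOpen_idem_mono {A B : Set I} (h : A ⊆ B) :
    (PrimeSpectrum.basicOpen (idempotentOfSet O A) : Set (PrimeSpectrum (∀ v, O v))) ⊆
      PrimeSpectrum.basicOpen (idempotentOfSet O B) := by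
  intro q hq
  rw [SetLike.mem_coe, PrimeSpectrum.mem_basicOpen] at hq ⊢
  intro hB
  exact hq (by rw [← idem_mul_of_subset O h]; exact Ideal.mul_mem_left _ _ hB)

/-- If every component of `f` indexed by `J` is a unit, then `D(e^J) ⊆ D(f)`. -/
lemma basicOpen_idem_subset_basicOpen {f : ∀ v, O v} {J : Set I}
    (hJ : ∀ v ∈ J, IsUnit (f v)) :
    (PrimeSpectrum.basicOpen (idempotentOfSet O J) : Set (PrimeSpectrum (∀ v, O v))) ⊆
      PrimeSpectrum.basicOpen f := by
  classical
  intro q hq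
  rw [SetLike.mem_coe, PrimeSpectrum.mem_basicOpen] at hq ⊢
  intro hf
  apply hq
  have key : idempotentOfSet O J =
      (fun v => if h : v ∈ J then (((hJ v h).unit⁻¹ : (O v)ˣ) : O v) else 0) * f := by
    funext v
    by_cases h : v ∈ J
    · simp only [Pi.mul_apply, dif_pos h, idem_apply_mem O h]
      exact ((hJ v h).val_inv_mul).symm
    · simp [Pi.mul_apply, dif_neg h, idem_apply_notMem O h]
  rw [key]
  exact Ideal.mul_mem_left _ _ hf

variable [∀ v, IsLocalRing (O v)]

/-- The "localization" prime attached to a prime `p` of `∏ O_v`: the set of `x` such that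
the idempotent of the unit-set of `x` lies in `p`. -/
noncomputable def piLocalPrime (p : PrimeSpectrum (∀ v, O v)) : Ideal (∀ v, O v) where
  carrier := {x | idempotentOfSet O {v | IsUnit (x v)} ∈ p.asIdeal}
  zero_mem' := by
    have : {v | IsUnit ((0 : ∀ v, O v) v)} = (∅ : Set I) := by
      ext v; simp [not_isUnit_zero]
    simp only [Set.mem_setOf_eq, this, idem_empty]
    exact (p.asIdeal).zero_mem
  add_mem' := by
    intro a b ha hb
    simp only [Set.mem_setOf_eq] at ha hb ⊢
    have hsub : {v | IsUnit ((a + b) v)} ⊆ {v | IsUnit (a v)} ∪ {v | IsUnit (b v)} := by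
      intro v hv
      exact IsLocalRing.isUnit_or_isUnit_of_isUnit_add hv
    have hU : idempotentOfSet O ({v | IsUnit (a v)} ∪ {v | IsUnit (b v)}) ∈ p.asIdeal := by
      rw [idem_union]
      exact Ideal.sub_mem _ (Ideal.add_mem _ ha hb) (Ideal.mul_mem_right _ _ ha)
    rw [← idem_mul_of_subset O hsub]
    exact Ideal.mul_mem_left _ _ hU
  smul_mem' := by
    intro c x hx
    simp only [Set.mem_setOf_eq, smul_eq_mul] at hx ⊢
    have hsub : {v | IsUnit ((c * x) v)} ⊆ {v | IsUnit (x v)} := by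
      intro v hv
      exact isUnit_of_mul_isUnit_right hv
    rw [← idem_mul_of_subset O hsub]
    exact Ideal.mul_mem_left _ _ hx

lemma piLocalPrime_isPrime (p : PrimeSpectrum (∀ v, O v)) : (piLocalPrime O p).IsPrime := by
  constructor
  · intro h
    rw [Ideal.eq_top_iff_one] at h
    have h1 : {v | IsUnit ((1 : ∀ v, O v) v)} = (Set.univ : Set I) := by
      ext v; simp
    have : idempotentOfSet O {v | IsUnit ((1 : ∀ v, O v) v)} ∈ p.asIdeal := h
    rw [h1, idem_univ] at this
    exact p.isPrime.ne_top (Ideal.eq_top_iff_one _ |>.2 this)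
  · intro x y hxy
    have h1 : {v | IsUnit ((x * y) v)} = {v | IsUnit (x v)} ∩ {v | IsUnit (y v)} := by
      ext v
      simp only [Set.mem_setOf_eq, Pi.mul_apply, Set.mem_inter_iff]
      exact ⟨fun h => ⟨isUnit_of_mul_isUnit_left h, isUnit_of_mul_isUnit_right h⟩,
        fun ⟨h1, h2⟩ => h1.mul h2⟩
    have : idempotentOfSet O {v | IsUnit ((x * y) v)} ∈ p.asIdeal := hxy
    rw [h1, idem_inter] at this
    exact p.isPrime.mem_or_mem this

omit [∀ (v : I), IsLocalRing (O v)] in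
/-- If `e^{A l} ∈ q` for all `l ∈ s` then `e^{⋃ l ∈ s, A l} ∈ q`. -/
lemma idem_biUnion_mem {k : ℕ} (q : Ideal (∀ v, O v)) (A : Fin k → Set I)
    (s : Finset (Fin k)) (h : ∀ l ∈ s, idempotentOfSet O (A l) ∈ q) :
    idempotentOfSet O (⋃ l ∈ s, A l) ∈ q := by
  classical
  induction s using Finset.induction_on with
  | empty => simp only [Finset.notMem_empty, Set.iUnion_of_empty, Set.iUnion_empty, idem_empty]
             exact q.zero_mem
  | @insert a s ha ih =>
    have h1 : (⋃ l ∈ insert a s, A l) = A a ∪ ⋃ l ∈ s, A l := by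
      simp [Set.biUnion_insert]
    rw [h1, idem_union]
    have hAa : idempotentOfSet O (A a) ∈ q := h a (Finset.mem_insert_self a s)
    have hrest : idempotentOfSet O (⋃ l ∈ s, A l) ∈ q :=
      ih (fun l hl => h l (Finset.mem_insert_of_mem hl))
    exact Ideal.sub_mem _ (Ideal.add_mem _ hAa hrest) (Ideal.mul_mem_right _ _ hAa)

end Aux

/-- Let R = ∏ O_v be a product of commutative local rings. Every open cover of Spec R
admits a refinement which is a finite disjoint open cover by basic opens D(e^J): there
are finitely many pairwise disjoint subsets J_1, …, J_k of I with union I such that the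
basic opens D(e^{J_l}) are pairwise disjoint, cover Spec R, and each is contained in
some member of the given cover. -/
theorem primeSpectrum_pi_local_cover_refinement
    {I : Type} (O : I → Type) [∀ v, CommRing (O v)] [∀ v, IsLocalRing (O v)]
    {ι : Type} (U : ι → Set (PrimeSpectrum (∀ v, O v)))
    (hopen : ∀ j, IsOpen (U j)) (hcover : ⋃ j, U j = Set.univ) :
    ∃ (k : ℕ) (J : Fin k → Set I),
      (Pairwise fun l m => Disjoint (J l) (J m)) ∧
      (⋃ l, J l) = Set.univ ∧
      (Pairwise fun l m =>
        Disjoint (PrimeSpectrum.basicOpen (idempotentOfSet O (J l)) : Set (PrimeSpectrum (∀ v, O v)))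
          (PrimeSpectrum.basicOpen (idempotentOfSet O (J m)) : Set (PrimeSpectrum (∀ v, O v)))) ∧
      (⋃ l, (PrimeSpectrum.basicOpen (idempotentOfSet O (J l)) : Set (PrimeSpectrum (∀ v, O v))))
        = Set.univ ∧
      (∀ l, ∃ j, (PrimeSpectrum.basicOpen (idempotentOfSet O (J l)) :
        Set (PrimeSpectrum (∀ v, O v))) ⊆ U j) := by
  classical
  set R := ∀ v, O v with hR
  -- Step 1: for every prime p there is a set J with p ∈ D(e^J) and D(e^J) ⊆ some U j.
  have hkey : ∀ p : PrimeSpectrum R, ∃ Jp : Set I,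
      p ∈ (PrimeSpectrum.basicOpen (idempotentOfSet O Jp) : Set (PrimeSpectrum R)) ∧
      ∃ j, (PrimeSpectrum.basicOpen (idempotentOfSet O Jp) : Set (PrimeSpectrum R)) ⊆ U j := by
    intro p
    set q : PrimeSpectrum R := ⟨piLocalPrime O p, piLocalPrime_isPrime O p⟩ with hq
    have hqmem : q ∈ ⋃ j, U j := hcover ▸ Set.mem_univ q
    obtain ⟨_, ⟨j, rfl⟩, hqj⟩ := hqmem
    obtain ⟨s, ⟨f, rfl⟩, hqs, hsub⟩ :=
      PrimeSpectrum.isTopologicalBasis_basic_opens.exists_subset_of_mem_open hqj (hopen j)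
    refine ⟨{v | IsUnit (f v)}, ?_, j, ?_⟩
    · -- p ∈ D(e^{unitSet f}) since f ∉ piLocalPrime p
      have hf : f ∉ piLocalPrime O p := hqs
      exact hf
    · exact (basicOpen_idem_subset_basicOpen O (fun v hv => hv)).trans hsub
  choose Jfun hJmem hJsub using hkey
  -- Step 2: compactness gives a finite subfamily covering Spec R.
  have hcov2 : (Set.univ : Set (PrimeSpectrum R)) ⊆
      ⋃ p : PrimeSpectrum R,
        (PrimeSpectrum.basicOpen (idempotentOfSet O (Jfun p)) : Set (PrimeSpectrum R)) := by
    intro p _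
    exact Set.mem_iUnion.2 ⟨p, hJmem p⟩
  obtain ⟨t, ht⟩ := isCompact_univ.elim_finite_subcover
    (fun p : PrimeSpectrum R =>
      (PrimeSpectrum.basicOpen (idempotentOfSet O (Jfun p)) : Set (PrimeSpectrum R)))
    (fun p => (PrimeSpectrum.basicOpen _).isOpen) hcov2
  set k := t.card with hk
  set eqv := t.equivFin with heqv
  set J0 : Fin k → Set I := fun l => Jfun ((eqv.symm l : t) : PrimeSpectrum R) with hJ0
  have hcov3 : (⋃ l, (PrimeSpectrum.basicOpen (idempotentOfSet O (J0 l)) :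
      Set (PrimeSpectrum R))) = Set.univ := by
    apply Set.eq_univ_of_univ_subset
    intro p hp
    obtain ⟨_, ⟨q, rfl⟩, ⟨_, ⟨hq, rfl⟩, hpq⟩⟩ := ht hp
    refine Set.mem_iUnion.2 ⟨eqv ⟨q, hq⟩, ?_⟩
    simpa [hJ0, Equiv.symm_apply_apply] using hpq
  -- each J0 has a containing U j
  have hJ0sub : ∀ l, ∃ j, (PrimeSpectrum.basicOpen (idempotentOfSet O (J0 l)) :
      Set (PrimeSpectrum R)) ⊆ U j := fun l => hJsub _
  -- Step 3: union of the J0's is everything.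
  have hJ0union : (⋃ l, J0 l) = Set.univ := by
    apply Set.eq_univ_of_forall
    intro v
    set pv : PrimeSpectrum R :=
      ⟨Ideal.comap (Pi.evalRingHom O v) (IsLocalRing.maximalIdeal (O v)),
        Ideal.IsPrime.comap _⟩ with hpv
    have hpvmem : pv ∈ ⋃ l, (PrimeSpectrum.basicOpen (idempotentOfSet O (J0 l)) :
        Set (PrimeSpectrum R)) := hcov3 ▸ Set.mem_univ pv
    obtain ⟨_, ⟨l, rfl⟩, hl⟩ := hpvmem
    refine Set.mem_iUnion.2 ⟨l, ?_⟩
    by_contra hv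
    apply hl
    show idempotentOfSet O (J0 l) ∈ pv.asIdeal
    show (idempotentOfSet O (J0 l)) v ∈ IsLocalRing.maximalIdeal (O v)
    rw [idem_apply_notMem O hv]
    exact (IsLocalRing.maximalIdeal (O v)).zero_mem
  -- Step 4: disjointify.
  set J : Fin k → Set I := fun l => J0 l \ ⋃ m : Fin k, ⋃ (_ : m < l), J0 m with hJdef
  have hJsubJ0 : ∀ l, J l ⊆ J0 l := fun l => Set.diff_subset
  have hdisj : Pairwise fun l m => Disjoint (J l) (J m) := by
    have key : ∀ l m : Fin k, m < l → Disjoint (J l) (J m) := by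
      intro l m hlm
      rw [Set.disjoint_left]
      intro v hvl hvm
      exact hvl.2 (Set.mem_iUnion.2 ⟨m, Set.mem_iUnion.2 ⟨hlm, hJsubJ0 m hvm⟩⟩)
    intro l m hne
    rcases lt_or_gt_of_ne hne with h | h
    · exact (key m l h).symm
    · exact key l m h
  have hJunion : (⋃ l, J l) = Set.univ := by
    apply Set.eq_univ_of_forall
    intro v
    have hv : v ∈ ⋃ l, J0 l := hJ0union ▸ Set.mem_univ v
    obtain ⟨_, ⟨l0, rfl⟩, hl0⟩ := hv
    have hex : ∃ n : ℕ, ∃ h : n < k, v ∈ J0 ⟨n, h⟩ := ⟨l0.1, l0.2, by simpa using hl0⟩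
    set n := Nat.find hex with hn
    obtain ⟨hnk, hvn⟩ := Nat.find_spec hex
    refine Set.mem_iUnion.2 ⟨⟨n, hnk⟩, hvn, ?_⟩
    intro hvmem
    obtain ⟨_, ⟨m, rfl⟩, ⟨_, ⟨hm, rfl⟩, hvm⟩⟩ := hvmem
    exact Nat.find_min hex (by exact_mod_cast hm) ⟨m.2, by simpa using hvm⟩
  refine ⟨k, J, hdisj, hJunion, ?_, ?_, ?_⟩
  · -- pairwise disjointness of the basic opens
    intro l m hne
    have h0 : J l ∩ J m = ∅ := Set.disjoint_iff_inter_eq_empty.1 (hdisj hne)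
    rw [Set.disjoint_iff_inter_eq_empty]
    have : (PrimeSpectrum.basicOpen (idempotentOfSet O (J l)) :
          Set (PrimeSpectrum R)) ∩ PrimeSpectrum.basicOpen (idempotentOfSet O (J m)) =
        (PrimeSpectrum.basicOpen (idempotentOfSet O (J l) * idempotentOfSet O (J m)) :
          Set (PrimeSpectrum R)) := by
      rw [PrimeSpectrum.basicOpen_mul]; rfl
    rw [this, ← idem_inter, h0, idem_empty]
    simp [PrimeSpectrum.basicOpen_zero]
  · -- the basic opens cover Spec R
    apply Set.eq_univ_of_forall
    intro q
    by_contra hq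
    rw [Set.mem_iUnion] at hq
    push_neg at hq
    have hall : ∀ l ∈ (Finset.univ : Finset (Fin k)),
        idempotentOfSet O (J l) ∈ q.asIdeal := by
      intro l _
      have := hq l
      simpa [PrimeSpectrum.mem_basicOpen, not_not] using this
    have h1 : idempotentOfSet O (⋃ l ∈ (Finset.univ : Finset (Fin k)), J l) ∈ q.asIdeal :=
      idem_biUnion_mem O q.asIdeal J Finset.univ hall
    have h2 : (⋃ l ∈ (Finset.univ : Finset (Fin k)), J l) = Set.univ := by
      rw [← hJunion]; simp
    rw [h2, idem_univ] at h1
    exact q.isPrime.ne_top (Ideal.eq_top_iff_one _ |>.2 h1)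
  · -- each basic open is inside some U j
    intro l
    obtain ⟨j, hj⟩ := hJ0sub l
    exact ⟨j, (basicOpen_idem_mono O (hJsubJ0 l)).trans hj⟩
end
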